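/- arXiv:0801.4156 — 2 statements merged into one kernel-verified Lean document; each statement's English description precedes it below -/
import Mathlib

section
/- Let ρ₁, ρ₂ be finite positive Borel measures on the circle Λ with ρ₁(Λ) ≤ ρ₂(Λ), and let l ∈ 𝒥 be such that for every ε > 0 the arc [l−ε, l) contains a point not belonging to 𝒥. Then for every w ∈ Λ such that the closed arc [l,w] is contained in 𝒥, one has E(l,w) ≥ 0. -/
open MeasureTheory Set Filter Topology

noncomputable section

instance fact01 : Fact ((0:ℝ) < 1) := ⟨zero_lt_one⟩

/-- The circle `ℝ/ℤ`. -/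
abbrev Circle' : Type := AddCircle (1:ℝ)

/-- The angular position of `w` in the arc starting at `u`, measured positively;
a real number in `[0,1)`. -/
noncomputable def theta (u w : Circle') : ℝ := ((AddCircle.equivIco 1 0) (w - u) : ℝ)

/-- The closed arc `[u,v]` from `u` to `v` in the positive direction. -/
def arcCC (u v : Circle') : Set Circle' := {w | theta u w ≤ theta u v}

/-- The half-open arc `(u,v]`. -/
def arcOC (u v : Circle') : Set Circle' := {w | 0 < theta u w ∧ theta u w ≤ theta u v}

/-- The half-open arc `[u,v)`. -/
def arcCO (u v : Circle') : Set Circle' := {w | theta u w < theta u v}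

/-- The open arc `(u,v)`. -/
def arcOO (u v : Circle') : Set Circle' := {w | 0 < theta u w ∧ theta u w < theta u v}

/-- The excess `E(u,v) = ρ₁([u,v]) - ρ₂([u,v])`. -/
noncomputable def excess (ρ₁ ρ₂ : Measure Circle') (u v : Circle') : ℝ :=
  (ρ₁ (arcCC u v)).toReal - (ρ₂ (arcCC u v)).toReal

/-- The flux `J(v) = sup_u max (E(u,v)) 0`. -/
noncomputable def flux (ρ₁ ρ₂ : Measure Circle') (v : Circle') : ℝ :=
  ⨆ u : Circle', max (excess ρ₁ ρ₂ u v) 0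

/-- The set `𝒥 = {v | ∃ u, E(u,v) > 0}`. -/
def Jset (ρ₁ ρ₂ : Measure Circle') : Set Circle' := {v | ∃ u : Circle', 0 < excess ρ₁ ρ₂ u v}

lemma theta_coe (a b : ℝ) : theta (↑a) (↑b) = Int.fract (b - a) := by
  rw [theta, ← AddCircle.coe_sub, AddCircle.coe_equivIco_mk_apply]
  simp

lemma theta_mem (u x : Circle') : theta u x ∈ Ico (0:ℝ) 1 := by
  have := ((AddCircle.equivIco 1 0) (x - u)).2
  simpa [theta] using this

lemma theta_nonneg (u x : Circle') : 0 ≤ theta u x := (theta_mem u x).1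
lemma theta_lt_one (u x : Circle') : theta u x < 1 := by
  have := (theta_mem u x).2; simpa using this

lemma fract_fract_sub (a b : ℝ) : Int.fract (Int.fract a - Int.fract b) = Int.fract (a - b) := by
  have h : Int.fract a - Int.fract b = (a - b) + ((⌊b⌋ - ⌊a⌋ : ℤ) : ℝ) := by
    simp only [Int.fract]; push_cast; ring
  rw [h, Int.fract_add_intCast]

lemma theta_rebase (l u x : Circle') : theta u x = Int.fract (theta l x - theta l u) := by
  induction l using QuotientAddGroup.induction_on with | H L =>
  induction u using QuotientAddGroup.induction_on with | H U =>
  induction x using QuotientAddGroup.induction_on with | H X =>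
  rw [theta_coe, theta_coe, theta_coe, fract_fract_sub]
  ring_nf

lemma theta_inj {u x y : Circle'} (h : theta u x = theta u y) : x = y := by
  have := (AddCircle.equivIco 1 0).injective (Subtype.coe_injective (h : _))
  exact sub_left_inj.mp this

lemma theta_self (u : Circle') : theta u u = 0 := by
  induction u using QuotientAddGroup.induction_on with | H U =>
  rw [theta_coe]; simp

lemma measurable_theta (u : Circle') : Measurable (theta u) := by
  have h1 : Measurable fun x : Circle' => x - u := by measurability
  exact (measurable_subtype_coe.comp (AddCircle.measurableEquivIco (T := 1) 0).measurable).comp h1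

lemma theta_add_coe (l : Circle') (r : ℝ) : theta l (l + (r : Circle')) = Int.fract r := by
  induction l using QuotientAddGroup.induction_on with | H L =>
  rw [← AddCircle.coe_add, theta_coe]
  ring_nf

lemma fract_of_mem {a : ℝ} (h1 : 0 ≤ a) (h2 : a < 1) : Int.fract a = a :=
  Int.fract_eq_self.mpr ⟨h1, h2⟩

lemma fract_neg_shift {a : ℝ} (h1 : a < 0) (h2 : 0 ≤ a + 1) :
    Int.fract a = a + 1 := by
  rw [← Int.fract_add_one, fract_of_mem h2 (by linarith)]

lemma arcCC_eq_of_le (l u v : Circle') (h : theta l u ≤ theta l v) :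
    arcCC u v = (theta l) ⁻¹' Icc (theta l u) (theta l v) := by
  ext x
  have ha0 : 0 ≤ theta l u := theta_nonneg l u
  have hb1 : theta l v < 1 := theta_lt_one l v
  have ht0 : 0 ≤ theta l x := theta_nonneg l x
  have ht1 : theta l x < 1 := theta_lt_one l x
  simp only [arcCC, mem_setOf_eq, mem_preimage, mem_Icc]
  rw [theta_rebase l u x, theta_rebase l u v,
    fract_of_mem (a := theta l v - theta l u) (by linarith) (by linarith)]
  rcases le_or_gt (theta l u) (theta l x) with hat | hat
  · rw [fract_of_mem (a := theta l x - theta l u) (by linarith) (by linarith)]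
    constructor
    · intro h2; exact ⟨hat, by linarith⟩
    · rintro ⟨h1, h2⟩; linarith
  · rw [fract_neg_shift (a := theta l x - theta l u) (by linarith) (by linarith)]
    constructor
    · intro h2; exfalso; linarith
    · rintro ⟨h1, h2⟩; exfalso; linarith

lemma arcCC_eq_of_gt (l u v : Circle') (h : theta l v < theta l u) :
    arcCC u v = (theta l) ⁻¹' (Iic (theta l v) ∪ Ici (theta l u)) := by
  ext x
  have ha0 : 0 ≤ theta l v := theta_nonneg l v
  have hb1 : theta l u < 1 := theta_lt_one l u
  have ht0 : 0 ≤ theta l x := theta_nonneg l x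
  have ht1 : theta l x < 1 := theta_lt_one l x
  simp only [arcCC, mem_setOf_eq, mem_preimage, mem_union, mem_Iic, mem_Ici]
  rw [theta_rebase l u x, theta_rebase l u v,
    fract_neg_shift (a := theta l v - theta l u) (by linarith) (by linarith)]
  rcases le_or_gt (theta l u) (theta l x) with hat | hat
  · rw [fract_of_mem (a := theta l x - theta l u) (by linarith) (by linarith)]
    constructor
    · intro _; exact Or.inr hat
    · intro _; linarith
  · rw [fract_neg_shift (a := theta l x - theta l u) (by linarith) (by linarith)]
    constructor
    · intro h2; exact Or.inl (by linarith)
    · rintro (h2 | h2) <;> linarith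

lemma arcCO_eq (l : Circle') {ε : ℝ} (h1 : 0 < ε) (h2 : ε < 1) :
    arcCO (l - ((ε : ℝ) : Circle')) l = (theta l) ⁻¹' Ici (1 - ε) := by
  have hkey : theta l (l - (ε : Circle')) = 1 - ε := by
    have he : l - ((ε : ℝ) : Circle') = l + ((-ε : ℝ) : Circle') := by
      rw [sub_eq_add_neg, AddCircle.coe_neg]
    rw [he, theta_add_coe,
      show (-ε : ℝ) = (1 - ε) + ((-1 : ℤ) : ℝ) by push_cast; ring, Int.fract_add_intCast,
      fract_of_mem (by linarith) (by linarith)]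
  ext x
  have ht0 : 0 ≤ theta l x := theta_nonneg l x
  have ht1 : theta l x < 1 := theta_lt_one l x
  simp only [arcCO, mem_setOf_eq, mem_preimage, mem_Ici]
  rw [theta_rebase l (l - (ε : Circle')) x, theta_rebase l (l - (ε : Circle')) l,
    hkey, theta_self,
    fract_neg_shift (a := (0:ℝ) - (1 - ε)) (by linarith) (by linarith)]
  rcases le_or_gt (1 - ε) (theta l x) with hat | hat
  · rw [fract_of_mem (a := theta l x - (1 - ε)) (by linarith) (by linarith)]
    constructor
    · intro _; exact hat
    · intro _; linarith
  · rw [fract_neg_shift (a := theta l x - (1 - ε)) (by linarith) (by linarith)]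
    constructor
    · intro h3; exfalso; linarith
    · intro h3; exfalso; linarith

lemma toReal_tendsto_iInter (μ : Measure Circle') [IsFiniteMeasure μ] (s : ℕ → Set Circle')
    (hs : ∀ n, MeasurableSet (s n)) (hm : Antitone s) :
    Tendsto (fun n => (μ (s n)).toReal) atTop (𝓝 ((μ (⋂ n, s n)).toReal)) := by
  have h := tendsto_measure_iInter_atTop (μ := μ) (fun n => (hs n).nullMeasurableSet) hm
    ⟨0, measure_ne_top μ _⟩
  exact (ENNReal.tendsto_toReal (measure_ne_top μ _)).comp h

lemma toReal_tendsto_iUnion (μ : Measure Circle') [IsFiniteMeasure μ] (s : ℕ → Set Circle')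
    (hm : Monotone s) :
    Tendsto (fun n => (μ (s n)).toReal) atTop (𝓝 ((μ (⋃ n, s n)).toReal)) :=
  (ENNReal.tendsto_toReal (measure_ne_top μ _)).comp (tendsto_measure_iUnion_atTop hm)

lemma mreal_mono (μ : Measure Circle') [IsFiniteMeasure μ] {A B : Set Circle'} (h : A ⊆ B) :
    (μ A).toReal ≤ (μ B).toReal :=
  ENNReal.toReal_mono (measure_ne_top μ _) (measure_mono h)

lemma onediv_tendsto : Tendsto (fun n : ℕ => 1 / ((n : ℝ) + 1)) atTop (𝓝 0) :=
  tendsto_one_div_add_atTop_nhds_zero_nat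


theorem stmt3' (ρ₁ ρ₂ : Measure Circle') [IsFiniteMeasure ρ₁] [IsFiniteMeasure ρ₂]
    (l : Circle')
    (hleft : ∀ ε : ℝ, 0 < ε → ∃ w ∈ arcCO (l - (ε : Circle')) l, w ∉ Jset ρ₁ ρ₂) :
    ∀ w : Circle', arcCC l w ⊆ Jset ρ₁ ρ₂ → 0 ≤ excess ρ₁ ρ₂ l w := by
  intro w hw
  by_contra hneg
  push_neg at hneg
  rw [excess] at hneg
  set δ : ℝ := -((ρ₁ (arcCC l w)).toReal - (ρ₂ (arcCC l w)).toReal) with hδdef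
  have hδ : 0 < δ := by simp only [hδdef]; linarith
  have hmc : Measurable (theta l) := measurable_theta l
  set g : Set ℝ → ℝ :=
    fun I => (ρ₁ ((theta l) ⁻¹' I)).toReal - (ρ₂ ((theta l) ⁻¹' I)).toReal with hg
  have hgadd : ∀ I J : Set ℝ, MeasurableSet J → Disjoint ((theta l) ⁻¹' I) ((theta l) ⁻¹' J) →
      g (I ∪ J) = g I + g J := by
    intro I J hJ hd
    simp only [hg, preimage_union]
    rw [measure_union hd (hmc hJ), measure_union hd (hmc hJ),
      ENNReal.toReal_add (measure_ne_top _ _) (measure_ne_top _ _),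
      ENNReal.toReal_add (measure_ne_top _ _) (measure_ne_top _ _)]
    ring
  have hgle : ∀ I : Set ℝ, g I ≤ (ρ₁ ((theta l) ⁻¹' I)).toReal := by
    intro I
    have : (0:ℝ) ≤ (ρ₂ ((theta l) ⁻¹' I)).toReal := ENNReal.toReal_nonneg
    simp only [hg]; linarith
  -- the arc [l, w] in coordinates
  have harcw : arcCC l w = (theta l) ⁻¹' Iic (theta l w) := by
    rw [arcCC_eq_of_le l l w (by rw [theta_self]; exact theta_nonneg l w)]
    ext x
    simp only [mem_preimage, mem_Icc, mem_Iic, theta_self]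
    exact and_iff_right (theta_nonneg l x)
  have hEw : g (Iic (theta l w)) = -δ := by
    simp only [hg, ← harcw, hδdef]; ring
  -- Step A : choose ε
  have hiInter : ⋂ n : ℕ, (theta l) ⁻¹' Ici (1 - 1/((n:ℝ)+1)) = ∅ := by
    ext x
    simp only [mem_iInter, mem_preimage, mem_Ici, mem_empty_iff_false, iff_false]
    intro hall
    obtain ⟨n, hn⟩ := exists_nat_one_div_lt (show (0:ℝ) < 1 - theta l x by
      linarith [theta_lt_one l x])
    have := hall n
    linarith
  have hAtend : Tendsto (fun n : ℕ => (ρ₁ ((theta l) ⁻¹' Ici (1 - 1/((n:ℝ)+1)))).toReal)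
      atTop (𝓝 0) := by
    have h := toReal_tendsto_iInter ρ₁ (fun n => (theta l) ⁻¹' Ici (1 - 1/((n:ℝ)+1)))
      (fun n => hmc measurableSet_Ici)
      (by
        intro n m hnm
        refine preimage_mono (Ici_subset_Ici.mpr ?_)
        have hnm' : ((n:ℝ)) ≤ (m:ℝ) := Nat.cast_le.mpr hnm
        have : 1 / ((m:ℝ)+1) ≤ 1 / ((n:ℝ)+1) :=
          one_div_le_one_div_of_le (by positivity) (by linarith)
        linarith)
    rw [hiInter] at h
    simpa using h
  have hev1 : ∀ᶠ n : ℕ in atTop, (ρ₁ ((theta l) ⁻¹' Ici (1 - 1/((n:ℝ)+1)))).toReal < δ :=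
    hAtend.eventually_lt_const hδ
  have hev2 : ∀ᶠ n : ℕ in atTop, 1/((n:ℝ)+1) < 1 - theta l w :=
    onediv_tendsto.eventually_lt_const (by linarith [theta_lt_one l w])
  obtain ⟨N, hN1, hN2⟩ := (hev1.and hev2).exists
  set ε : ℝ := 1/((N:ℝ)+1) with hεdef
  have hε0 : 0 < ε := by positivity
  have hεw : theta l w < 1 - ε := by linarith
  have hε1 : ε < 1 := by linarith [theta_nonneg l w]
  obtain ⟨p, hp, hpJ⟩ := hleft ε hε0
  rw [arcCO_eq l hε0 hε1] at hp
  have hcp : 1 - ε ≤ theta l p := hp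
  have hpE : ∀ u : Circle', (ρ₁ (arcCC u p)).toReal - (ρ₂ (arcCC u p)).toReal ≤ 0 := by
    intro u
    by_contra h
    exact hpJ ⟨u, show 0 < excess ρ₁ ρ₂ u p by rw [excess]; linarith⟩
  -- Step B : the infimum
  set T : Set ℝ := {t | t ∈ Icc 0 (theta l w) ∧ g (Iic t) ≤ -δ} with hT
  have hwT : theta l w ∈ T := ⟨⟨theta_nonneg l w, le_refl _⟩, le_of_eq hEw⟩
  have hTne : T.Nonempty := ⟨_, hwT⟩
  have hTbdd : BddBelow T := ⟨0, fun t ht => ht.1.1⟩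
  set t₀ : ℝ := sInf T with ht₀def
  have ht₀0 : 0 ≤ t₀ := le_csInf hTne fun t ht => ht.1.1
  have ht₀w : t₀ ≤ theta l w := csInf_le hTbdd hwT
  have ht₀1 : t₀ < 1 := lt_of_le_of_lt ht₀w (theta_lt_one l w)
  -- right-continuity : g (Iic t₀) ≤ -δ
  have hex : ∀ n : ℕ, ∃ t ∈ T, t < t₀ + 1/((n:ℝ)+1) :=
    fun n => exists_lt_of_csInf_lt hTne (lt_add_of_pos_right _ (by positivity))
  choose sq hsqT hsqlt using hex
  have hsqge : ∀ n, t₀ ≤ sq n := fun n => csInf_le hTbdd (hsqT n)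
  have hiInter2 : ⋂ n : ℕ, (theta l) ⁻¹' Iic (t₀ + 1/((n:ℝ)+1)) = (theta l) ⁻¹' Iic t₀ := by
    ext x
    simp only [mem_iInter, mem_preimage, mem_Iic]
    constructor
    · intro hall
      by_contra h
      push_neg at h
      obtain ⟨n, hn⟩ := exists_nat_one_div_lt (show (0:ℝ) < theta l x - t₀ by linarith)
      have := hall n
      linarith
    · intro h n
      have : (0:ℝ) < 1/((n:ℝ)+1) := by positivity
      linarith
  have hanti : Antitone fun n : ℕ => (theta l) ⁻¹' Iic (t₀ + 1/((n:ℝ)+1)) := by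
    intro n m hnm
    refine preimage_mono (Iic_subset_Iic.mpr ?_)
    have hnm' : ((n:ℝ)) ≤ (m:ℝ) := Nat.cast_le.mpr hnm
    have : 1 / ((m:ℝ)+1) ≤ 1 / ((n:ℝ)+1) :=
      one_div_le_one_div_of_le (by positivity) (by linarith)
    linarith
  have hsq : ∀ μ : Measure Circle', IsFiniteMeasure μ →
      Tendsto (fun n => (μ ((theta l) ⁻¹' Iic (sq n))).toReal) atTop
        (𝓝 ((μ ((theta l) ⁻¹' Iic t₀)).toReal)) := by
    intro μ hμ
    have hup := toReal_tendsto_iInter μ _ (fun n => hmc measurableSet_Iic) hanti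
    rw [hiInter2] at hup
    refine tendsto_of_tendsto_of_tendsto_of_le_of_le tendsto_const_nhds hup ?_ ?_
    · intro n
      exact mreal_mono μ (preimage_mono (Iic_subset_Iic.mpr (hsqge n)))
    · intro n
      exact mreal_mono μ (preimage_mono (Iic_subset_Iic.mpr (le_of_lt (hsqlt n))))
  have hgt₀ : g (Iic t₀) ≤ -δ := by
    have htend : Tendsto (fun n => g (Iic (sq n))) atTop (𝓝 (g (Iic t₀))) := by
      simp only [hg]
      exact (hsq ρ₁ inferInstance).sub (hsq ρ₂ inferInstance)
    exact le_of_tendsto htend (Eventually.of_forall fun n => (hsqT n).2)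
  -- the point v₀
  set v₀ : Circle' := l + ((t₀ : ℝ) : Circle') with hv₀def
  have hcv₀ : theta l v₀ = t₀ := by
    rw [hv₀def, theta_add_coe, fract_of_mem ht₀0 ht₀1]
  have hv₀w : v₀ ∈ arcCC l w := by
    show theta l v₀ ≤ theta l w
    rw [hcv₀]; exact ht₀w
  obtain ⟨u, hu⟩ := hw hv₀w
  rw [excess] at hu
  rcases le_or_gt (theta l u) t₀ with hle | hgt
  · -- u ∈ [l, v₀]
    have harc : arcCC u v₀ = (theta l) ⁻¹' Icc (theta l u) t₀ := by
      rw [arcCC_eq_of_le l u v₀ (by rw [hcv₀]; exact hle), hcv₀]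
    rcases eq_or_lt_of_le (theta_nonneg l u) with h0 | h0
    · -- theta l u = 0 : contradiction with g (Iic t₀) ≤ -δ
      have : arcCC u v₀ = (theta l) ⁻¹' Iic t₀ := by
        rw [harc, ← h0]
        ext x
        simp only [mem_preimage, mem_Icc, mem_Iic]
        exact and_iff_right (theta_nonneg l x)
      rw [this] at hu
      have : g (Iic t₀) = (ρ₁ ((theta l) ⁻¹' Iic t₀)).toReal - (ρ₂ ((theta l) ⁻¹' Iic t₀)).toReal := rfl
      linarith
    · -- 0 < theta l u
      have hun : Iio (theta l u) ∪ Icc (theta l u) t₀ = Iic t₀ := by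
        ext t
        simp only [mem_union, mem_Iio, mem_Icc, mem_Iic]
        constructor
        · rintro (h | ⟨h1, h2⟩) <;> [linarith; exact h2]
        · intro h
          rcases lt_or_ge t (theta l u) with h2 | h2
          · exact Or.inl h2
          · exact Or.inr ⟨h2, h⟩
      have hdisj : Disjoint ((theta l) ⁻¹' Iio (theta l u)) ((theta l) ⁻¹' Icc (theta l u) t₀) := by
        rw [Set.disjoint_left]
        rintro x hx ⟨h1, _⟩
        exact absurd hx (not_lt.mpr h1)
      have hsplit : g (Iic t₀) = g (Iio (theta l u)) + g (Icc (theta l u) t₀) := by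
        rw [← hun, hgadd _ _ measurableSet_Icc hdisj]
      have hEu : g (Icc (theta l u) t₀) =
          (ρ₁ (arcCC u v₀)).toReal - (ρ₂ (arcCC u v₀)).toReal := by rw [harc]
      have hIio : g (Iio (theta l u)) < -δ := by linarith
      -- increasing union
      have hmono : Monotone fun n : ℕ =>
          (theta l) ⁻¹' Iic (theta l u - theta l u/((n:ℝ)+1)) := by
        intro n m hnm
        refine preimage_mono (Iic_subset_Iic.mpr ?_)
        have hnm' : ((n:ℝ)) ≤ (m:ℝ) := Nat.cast_le.mpr hnm
        have : theta l u / ((m:ℝ)+1) ≤ theta l u / ((n:ℝ)+1) :=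
          div_le_div_of_nonneg_left (le_of_lt h0) (by positivity) (by linarith)
        linarith
      have hiUn : (⋃ n : ℕ, (theta l) ⁻¹' Iic (theta l u - theta l u/((n:ℝ)+1))) =
          (theta l) ⁻¹' Iio (theta l u) := by
        ext x
        simp only [mem_iUnion, mem_preimage, mem_Iic, mem_Iio]
        constructor
        · rintro ⟨n, hn⟩
          have : (0:ℝ) < theta l u/((n:ℝ)+1) := div_pos h0 (by positivity)
          linarith
        · intro h
          have htd : Tendsto (fun n : ℕ => theta l u * (1/((n:ℝ)+1))) atTop (𝓝 0) := by
            simpa using onediv_tendsto.const_mul (theta l u)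
          obtain ⟨n, hn⟩ := (htd.eventually_lt_const (show (0:ℝ) < theta l u - theta l x by
            linarith)).exists
          exact ⟨n, by rw [show theta l u / ((n:ℝ)+1) = theta l u * (1/((n:ℝ)+1)) by ring]; linarith⟩
      have htendu : Tendsto (fun n : ℕ => g (Iic (theta l u - theta l u/((n:ℝ)+1)))) atTop
          (𝓝 (g (Iio (theta l u)))) := by
        simp only [hg]
        have h1 := toReal_tendsto_iUnion ρ₁ _ hmono
        have h2 := toReal_tendsto_iUnion ρ₂ _ hmono
        rw [hiUn] at h1 h2
        exact h1.sub h2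
      obtain ⟨n, hn⟩ := (htendu.eventually_lt_const hIio).exists
      have hq0 : 0 ≤ theta l u - theta l u/((n:ℝ)+1) := by
        have hn0 : (0:ℝ) ≤ (n:ℝ) := Nat.cast_nonneg n
        have := div_le_self (le_of_lt h0) (show (1:ℝ) ≤ (n:ℝ)+1 by linarith)
        linarith
      have hqlt : theta l u - theta l u/((n:ℝ)+1) < theta l u := by
        have : (0:ℝ) < theta l u/((n:ℝ)+1) := div_pos h0 (by positivity)
        linarith
      have hqT : theta l u - theta l u/((n:ℝ)+1) ∈ T :=
        ⟨⟨hq0, by linarith [theta_lt_one l w]⟩, le_of_lt hn⟩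
      have := csInf_le hTbdd hqT
      rw [← ht₀def] at this
      linarith
  · -- t₀ < theta l u : wrap case
    have harc : arcCC u v₀ = (theta l) ⁻¹' (Iic t₀ ∪ Ici (theta l u)) := by
      rw [arcCC_eq_of_gt l u v₀ (by rw [hcv₀]; exact hgt), hcv₀]
    have hdisj : Disjoint ((theta l) ⁻¹' Iic t₀) ((theta l) ⁻¹' Ici (theta l u)) := by
      rw [Set.disjoint_left]
      intro x hx h2
      simp only [mem_preimage, mem_Iic] at hx
      simp only [mem_preimage, mem_Ici] at h2
      linarith
    have hsplit : g (Iic t₀ ∪ Ici (theta l u)) = g (Iic t₀) + g (Ici (theta l u)) :=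
      hgadd _ _ measurableSet_Ici hdisj
    have hEu : g (Iic t₀ ∪ Ici (theta l u)) =
        (ρ₁ (arcCC u v₀)).toReal - (ρ₂ (arcCC u v₀)).toReal := by rw [harc]
    have hIci : g (Ici (theta l u)) < δ := by
      rcases le_or_gt (theta l p) (theta l u) with hcu | hcu
      · calc g (Ici (theta l u)) ≤ (ρ₁ ((theta l) ⁻¹' Ici (theta l u))).toReal := hgle _
          _ ≤ (ρ₁ ((theta l) ⁻¹' Ici (1 - ε))).toReal :=
              mreal_mono ρ₁ (preimage_mono (Ici_subset_Ici.mpr (by linarith)))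
          _ < δ := hN1
      · have hun2 : Icc (theta l u) (theta l p) ∪ Ioi (theta l p) = Ici (theta l u) := by
          ext t
          simp only [mem_union, mem_Icc, mem_Ioi, mem_Ici]
          constructor
          · rintro (⟨h1, _⟩ | h1) <;> [exact h1; linarith]
          · intro h
            rcases le_or_gt t (theta l p) with h2 | h2
            · exact Or.inl ⟨h, h2⟩
            · exact Or.inr h2
        have hdisj2 : Disjoint ((theta l) ⁻¹' Icc (theta l u) (theta l p))
            ((theta l) ⁻¹' Ioi (theta l p)) := by
          rw [Set.disjoint_left]
          rintro x ⟨_, h1⟩ h2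
          simp only [mem_preimage, mem_Ioi] at h2
          exact absurd h2 (not_lt.mpr h1)
        have hsplit2 : g (Ici (theta l u)) =
            g (Icc (theta l u) (theta l p)) + g (Ioi (theta l p)) := by
          rw [← hun2, hgadd _ _ measurableSet_Ioi hdisj2]
        have h1 : g (Icc (theta l u) (theta l p)) ≤ 0 := by
          have : arcCC u p = (theta l) ⁻¹' Icc (theta l u) (theta l p) :=
            arcCC_eq_of_le l u p (le_of_lt hcu)
          have h2 := hpE u
          rw [this] at h2
          exact h2
        have h2 : g (Ioi (theta l p)) < δ :=
          lt_of_le_of_lt (le_trans (hgle _)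
            (mreal_mono ρ₁ (preimage_mono fun t ht => le_of_lt (lt_of_le_of_lt hcp ht)))) hN1
        linarith
    linarith

/-- if `l ∈ 𝒥` and every arc `[l-ε, l)` contains a point outside `𝒥`,
then for every `w` with `[l,w] ⊆ 𝒥` one has `E(l,w) ≥ 0`. -/
theorem stmt3 (ρ₁ ρ₂ : Measure Circle') [IsFiniteMeasure ρ₁] [IsFiniteMeasure ρ₂]
    (hmass : ρ₁ Set.univ ≤ ρ₂ Set.univ)
    (l : Circle') (hl : l ∈ Jset ρ₁ ρ₂)
    (hleft : ∀ ε : ℝ, 0 < ε → ∃ w ∈ arcCO (l - (ε : Circle')) l, w ∉ Jset ρ₁ ρ₂) :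
    ∀ w : Circle', arcCC l w ⊆ Jset ρ₁ ρ₂ → 0 ≤ excess ρ₁ ρ₂ l w :=
  stmt3' ρ₁ ρ₂ l hleft

end
end

section
/- Let m₁ ≤ m₂ be positive real numbers. Let (ρ₁⁽ⁿ⁾)ₙ and (ρ₂⁽ⁿ⁾)ₙ be sequences of finite positive Borel measures on the circle Λ with ρ₁⁽ⁿ⁾(Λ) = m₁ and ρ₂⁽ⁿ⁾(Λ) = m₂, converging weakly to measures ρ₁ and ρ₂ respectively, where ρ₁ and ρ₂ are absolutely continuous with respect to Haar measure. Then for every v ∈ Λ, the fluxes converge pointwise: Jⁿ(v) → J(v) as n → ∞, where Jⁿ is the flux associated to the pair (ρ₁⁽ⁿ⁾, ρ₂⁽ⁿ⁾) and J the flux associated to (ρ₁, ρ₂). -/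
open MeasureTheory Set Filter Topology

noncomputable section

/-!
Fix `v`. The arcs `[u, v]` are the sublevel sets `{w | theta w v ≤ t}` of the arc length to `v`,
so every excess is a difference of values of the two distribution functions
`t ↦ μ([v - t, v])`. These sublevel sets have boundary inside `{v - t, v}`, which the absolutely
continuous limits do not charge, so by the portmanteau theorem the distribution functions converge
pointwise. They are monotone and the limiting ones are continuous, so the convergence is uniform
in `t` (Pólya), and the fluxes, suprema over `t`, converge.
-/

theorem tendsto_measureReal_of_null_frontier {Ω ι : Type*} [MeasurableSpace Ω]
    [TopologicalSpace Ω] [OpensMeasurableSpace Ω] [HasOuterApproxClosed Ω] {L : Filter ι}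
    {μs : ι → Measure Ω} [∀ i, IsFiniteMeasure (μs i)] {μ : Measure Ω} [IsFiniteMeasure μ]
    (h : ∀ f : BoundedContinuousFunction Ω ℝ,
      Tendsto (fun i => ∫ x, f x ∂(μs i)) L (𝓝 (∫ x, f x ∂μ)))
    {E : Set Ω} (hE : μ (frontier E) = 0) :
    Tendsto (fun i => (μs i).real E) L (𝓝 (μ.real E)) := by
  let P : ι → FiniteMeasure Ω := fun i => ⟨μs i, inferInstance⟩
  let Q : FiniteMeasure Ω := ⟨μ, inferInstance⟩
  have hPQ : Tendsto P L (𝓝 Q) := FiniteMeasure.tendsto_iff_forall_integral_tendsto.2 h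
  suffices Tendsto (fun i => P i E) L (𝓝 (Q E)) from NNReal.tendsto_coe.2 this
  by_cases hQ : Q = 0
  · have hmass : Tendsto (fun i => (P i).mass) L (𝓝 0) := by
      simpa [hQ] using hPQ.mass
    rw [hQ, FiniteMeasure.coeFn_zero]
    exact tendsto_of_tendsto_of_tendsto_of_le_of_le tendsto_const_nhds hmass
      (fun _ => bot_le) (fun i => (P i).apply_le_mass E)
  · have : NeZero μ := ⟨fun hμ => hQ (Subtype.ext hμ)⟩
    have : Nonempty Ω := μ.nonempty_of_neZero
    simp_rw [FiniteMeasure.self_eq_mass_mul_normalize _ E]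
    refine hPQ.mass.mul (ProbabilityMeasure.tendsto_measure_of_null_frontier_of_tendsto
      (FiniteMeasure.tendsto_normalize_of_tendsto hPQ hQ) ?_)
    rw [FiniteMeasure.normalize_eq_of_nonzero _ hQ]
    simp [Q, hE]

theorem tendstoUniformlyOn_Icc_of_monotoneOn {ι : Type*} {L : Filter ι} {F : ι → ℝ → ℝ}
    {f : ℝ → ℝ} {a b : ℝ} (hF : ∀ i, MonotoneOn (F i) (Icc a b))
    (hf : ContinuousOn f (Icc a b)) (h : ∀ t ∈ Icc a b, Tendsto (fun i => F i t) L (𝓝 (f t))) :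
    TendstoUniformlyOn F f L (Icc a b) := by
  rw [← tendstoLocallyUniformlyOn_iff_tendstoUniformlyOn_of_compact isCompact_Icc,
    Metric.tendstoLocallyUniformlyOn_iff]
  intro ε hε x hx
  obtain ⟨δ, hδ, hfx⟩ := Metric.continuousWithinAt_iff.1 (hf x hx) (ε / 4) (by positivity)
  set p := max a (x - δ / 2)
  set q := min b (x + δ / 2)
  have hpq : Icc p q ⊆ Icc a b := Icc_subset_Icc (le_max_left _ _) (min_le_left _ _)
  have hxpq : x ∈ Icc p q := ⟨max_le hx.1 (by linarith), le_min hx.2 (by linarith)⟩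
  have hclose : ∀ y ∈ Icc p q, |f y - f x| < ε / 4 := by
    refine fun y hy => hfx (hpq hy) (abs_lt.2 ⟨?_, ?_⟩)
    · linarith [le_max_right a (x - δ / 2), hy.1]
    · linarith [min_le_right b (x + δ / 2), hy.2]
  have hp : p ∈ Icc p q := ⟨le_rfl, hxpq.1.trans hxpq.2⟩
  have hq : q ∈ Icc p q := ⟨hxpq.1.trans hxpq.2, le_rfl⟩
  refine ⟨Icc p q, ?_, ?_⟩
  · refine mem_nhdsWithin.2
      ⟨Ioo (x - δ / 2) (x + δ / 2), isOpen_Ioo, ⟨by linarith, by linarith⟩, ?_⟩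
    rintro y ⟨⟨hy₁, hy₂⟩, hy⟩
    exact ⟨max_le hy.1 hy₁.le, le_min hy.2 hy₂.le⟩
  · -- `F i` is squeezed on `[p, q]` between its values at the endpoints, both close to `f x`.
    filter_upwards [(h p (hpq hp)).eventually (Metric.ball_mem_nhds _ (half_pos hε)),
      (h q (hpq hq)).eventually (Metric.ball_mem_nhds _ (half_pos hε))] with i hip hiq y hy
    have hFp := hF i (hpq hp) (hpq hy) hy.1
    have hFq := hF i (hpq hy) (hpq hq) hy.2
    have hfy := abs_lt.1 (hclose y hy)
    have hfp := abs_lt.1 (hclose p hp)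
    have hfq := abs_lt.1 (hclose q hq)
    rw [Real.dist_eq, abs_lt] at hip hiq
    rw [Real.dist_eq, abs_lt]
    constructor <;> linarith [hfy.1, hfy.2, hfp.1, hfp.2, hfq.1, hfq.2, hip.1, hip.2, hiq.1, hiq.2]

theorem continuous_measureReal_Iic (ν : Measure ℝ) [IsFiniteMeasure ν] [NullSingletonClass ν] :
    Continuous fun t => ν.real (Iic t) := by
  have hprim : (fun t => ν.real (Iic t)) = fun t => ∫ _ in Iic t, (1 : ℝ) ∂ν := by
    ext t; simp
  rw [hprim, continuous_iff_continuousAt]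
  intro t
  exact ((integrableOn_const (by finiteness)).continuousOn_Iic_primitive_Iic
    (a₀ := t + 1)).continuousAt (Iic_mem_nhds (by linarith))

theorem abs_ciSup_sub_ciSup_le {ι : Type*} [Nonempty ι] {f g : ι → ℝ} (hf : BddAbove (range f))
    (hg : BddAbove (range g)) {ε : ℝ} (h : ∀ i, |f i - g i| ≤ ε) :
    |(⨆ i, f i) - ⨆ i, g i| ≤ ε := by
  rw [abs_sub_le_iff, sub_le_iff_le_add, sub_le_iff_le_add]
  constructor
  · exact ciSup_le fun i => by linarith [(abs_sub_le_iff.1 (h i)).1, le_ciSup hg i]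
  · exact ciSup_le fun i => by linarith [(abs_sub_le_iff.1 (h i)).2, le_ciSup hf i]

theorem frontier_preimage_Iic_subset {X α : Type*} [TopologicalSpace X] [LinearOrder α]
    [TopologicalSpace α] [OrderClosedTopology α] (f : X → α) (t : α) :
    frontier (f ⁻¹' Iic t) ⊆ {x | ¬ContinuousAt f x} ∪ f ⁻¹' {t} := by
  intro x hx
  refine or_iff_not_imp_left.2 fun hf => ?_
  rw [mem_ofPred_eq, not_not] at hf
  rcases lt_trichotomy (f x) t with hlt | heq | hgt
  · exact absurd (mem_interior_iff_mem_nhds.2 (mem_of_superset (hf (Iio_mem_nhds hlt))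
      fun y hy => le_of_lt hy)) hx.2
  · exact heq
  · obtain ⟨y, hy₁, hy₂⟩ := mem_closure_iff_nhds.1 hx.1 _ (hf (Ioi_mem_nhds hgt))
    exact absurd hy₂ (not_le.2 hy₁)

instance {T : ℝ} [Fact (0 < T)] : NullSingletonClass (volume : Measure (AddCircle T)) :=
  ⟨fun x => by simpa using AddCircle.volume_closedBall T (x := x) 0⟩

theorem MeasureTheory.Measure.AbsolutelyContinuous.nullSingletonClass {α : Type*}
    [MeasurableSpace α] {μ ν : Measure α} [NullSingletonClass ν] (h : μ ≪ ν) :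
    NullSingletonClass μ :=
  ⟨fun x => h (measure_singleton x)⟩

theorem theta_mem_Ico (u w : Circle') : theta u w ∈ Ico (0 : ℝ) 1 := by
  simpa [theta] using ((AddCircle.equivIco 1 0) (w - u)).2

theorem coe_theta (u w : Circle') : (theta u w : Circle') = w - u :=
  AddCircle.coe_equivIco

theorem theta_eq_of_coe {u w : Circle'} {s : ℝ} (hs : s ∈ Ico (0 : ℝ) 1)
    (h : (s : Circle') = w - u) : theta u w = s := by
  rw [theta, ← h, AddCircle.equivIco_coe_eq (by simpa using hs)]

theorem theta_left_injective (v : Circle') : Function.Injective fun w => theta w v :=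
  fun _ _ h => sub_right_injective ((AddCircle.equivIco 1 0).injective (Subtype.ext h))

theorem measurable_theta_left (v : Circle') : Measurable fun w => theta w v :=
  measurable_subtype_coe.comp ((AddCircle.measurableEquivIco 1 0).measurable.comp
    (measurable_const.sub measurable_id))

theorem continuousAt_theta_left {v w : Circle'} (h : w ≠ v) :
    ContinuousAt (fun w => theta w v) w :=
  continuousAt_subtype_val.comp ((AddCircle.continuousAt_equivIco 1 0
    (by simpa [sub_eq_zero] using h.symm)).comp (continuousAt_const.sub continuousAt_id))

theorem theta_eq_sub {u v w : Circle'} (h : theta u w ≤ theta u v) :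
    theta w v = theta u v - theta u w := by
  have hw := theta_mem_Ico u w
  have hv := theta_mem_Ico u v
  refine theta_eq_of_coe ⟨by linarith, by linarith [hw.1, hv.2]⟩ ?_
  rw [AddCircle.coe_sub, coe_theta, coe_theta]
  abel

theorem theta_eq_sub_add_one {u v w : Circle'} (h : theta u v < theta u w) :
    theta w v = theta u v - theta u w + 1 := by
  have hw := theta_mem_Ico u w
  have hv := theta_mem_Ico u v
  refine theta_eq_of_coe ⟨by linarith [hw.2, hv.1], by linarith⟩ ?_
  rw [AddCircle.coe_add, AddCircle.coe_sub, coe_theta, coe_theta, AddCircle.coe_period]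
  abel

theorem arcCC_eq_preimage_theta (u v : Circle') :
    arcCC u v = (fun w => theta w v) ⁻¹' Iic (theta u v) := by
  ext w
  simp only [arcCC, mem_ofPred_eq, mem_preimage, mem_Iic]
  rcases le_or_gt (theta u w) (theta u v) with h | h
  · simp only [h, theta_eq_sub h, true_iff]
    linarith [(theta_mem_Ico u w).1]
  · simp only [not_le.2 h, theta_eq_sub_add_one h, false_iff, not_le]
    linarith [(theta_mem_Ico u w).2]

/-- `arcMass μ v t` is the `μ`-mass of the closed arc `[v - t, v]` when `0 ≤ t < 1`. -/
def arcMass (μ : Measure Circle') (v : Circle') (t : ℝ) : ℝ :=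
  μ.real ((fun w => theta w v) ⁻¹' Iic t)

theorem excess_eq_arcMass (μ₁ μ₂ : Measure Circle') (u v : Circle') :
    excess μ₁ μ₂ u v = arcMass μ₁ v (theta u v) - arcMass μ₂ v (theta u v) := by
  rw [arcMass, arcMass, ← arcCC_eq_preimage_theta]
  rfl

theorem monotone_arcMass (μ : Measure Circle') [IsFiniteMeasure μ] (v : Circle') :
    Monotone (arcMass μ v) :=
  fun _ _ hst => measureReal_mono (preimage_mono (Iic_subset_Iic.2 hst))

theorem subsingleton_preimage_theta_left (v : Circle') (t : ℝ) :
    ((fun w => theta w v) ⁻¹' {t}).Subsingleton :=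
  subsingleton_singleton.preimage (theta_left_injective v)

theorem measure_frontier_preimage_theta_Iic (μ : Measure Circle') [NullSingletonClass μ]
    (v : Circle') (t : ℝ) : μ (frontier ((fun w => theta w v) ⁻¹' Iic t)) = 0 := by
  refine measure_mono_null (frontier_preimage_Iic_subset _ t) (measure_union_null ?_ ?_)
  · refine measure_mono_null (fun w hw => ?_) (measure_singleton v)
    by_contra hwv
    exact hw (continuousAt_theta_left hwv)
  · exact (subsingleton_preimage_theta_left v t).measure_zero μ

theorem continuous_arcMass (μ : Measure Circle') [IsFiniteMeasure μ] [NullSingletonClass μ]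
    (v : Circle') : Continuous (arcMass μ v) := by
  have hmap (s : Set ℝ) (hs : MeasurableSet s) :
      μ.map (fun w => theta w v) s = μ ((fun w => theta w v) ⁻¹' s) :=
    Measure.map_apply (measurable_theta_left v) hs
  have : NullSingletonClass (μ.map fun w => theta w v) :=
    ⟨fun t => by
      rw [hmap _ (measurableSet_singleton t)]
      exact (subsingleton_preimage_theta_left v t).measure_zero μ⟩
  have hcdf : arcMass μ v = fun t => (μ.map fun w => theta w v).real (Iic t) := by
    ext t
    rw [arcMass, measureReal_def, measureReal_def, hmap _ measurableSet_Iic]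
  rw [hcdf]
  exact continuous_measureReal_Iic _

theorem tendstoUniformlyOn_arcMass {ι : Type*} {L : Filter ι} {μs : ι → Measure Circle'}
    [∀ i, IsFiniteMeasure (μs i)] {μ : Measure Circle'} [IsFiniteMeasure μ] [NullSingletonClass μ]
    (h : ∀ f : BoundedContinuousFunction Circle' ℝ,
      Tendsto (fun i => ∫ x, f x ∂(μs i)) L (𝓝 (∫ x, f x ∂μ)))
    (v : Circle') : TendstoUniformlyOn (fun i => arcMass (μs i) v) (arcMass μ v) L (Icc 0 1) :=
  tendstoUniformlyOn_Icc_of_monotoneOn (fun i => (monotone_arcMass (μs i) v).monotoneOn _)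
    (continuous_arcMass μ v).continuousOn
    fun t _ => tendsto_measureReal_of_null_frontier h (measure_frontier_preimage_theta_Iic μ v t)

theorem bddAbove_range_max_excess (μ₁ μ₂ : Measure Circle') [IsFiniteMeasure μ₁] (v : Circle') :
    BddAbove (range fun u => max (excess μ₁ μ₂ u v) 0) := by
  refine ⟨μ₁.real univ, forall_mem_range.2 fun u => max_le ?_ measureReal_nonneg⟩
  have := measureReal_mono (μ := μ₁) (subset_univ (arcCC u v))
  have : 0 ≤ μ₂.real (arcCC u v) := measureReal_nonneg
  rw [excess, ← measureReal_def, ← measureReal_def]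
  linarith

theorem abs_flux_sub_flux_le {μ₁ μ₂ ν₁ ν₂ : Measure Circle'} [IsFiniteMeasure μ₁]
    [IsFiniteMeasure ν₁] (v : Circle') {ε : ℝ}
    (h : ∀ u, |excess μ₁ μ₂ u v - excess ν₁ ν₂ u v| ≤ ε) :
    |flux μ₁ μ₂ v - flux ν₁ ν₂ v| ≤ ε :=
  abs_ciSup_sub_ciSup_le (bddAbove_range_max_excess μ₁ μ₂ v) (bddAbove_range_max_excess ν₁ ν₂ v)
    fun u => (abs_max_sub_max_le_abs _ _ _).trans (h u)

theorem tendsto_flux_of_tendstoUniformlyOn {ι : Type*} {L : Filter ι}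
    {μ₁ μ₂ : ι → Measure Circle'} [∀ i, IsFiniteMeasure (μ₁ i)] {ν₁ ν₂ : Measure Circle'}
    [IsFiniteMeasure ν₁] (v : Circle')
    (h₁ : TendstoUniformlyOn (fun i => arcMass (μ₁ i) v) (arcMass ν₁ v) L (Icc 0 1))
    (h₂ : TendstoUniformlyOn (fun i => arcMass (μ₂ i) v) (arcMass ν₂ v) L (Icc 0 1)) :
    Tendsto (fun i => flux (μ₁ i) (μ₂ i) v) L (𝓝 (flux ν₁ ν₂ v)) := by
  refine Metric.tendsto_nhds.2 fun ε hε => ?_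
  filter_upwards [Metric.tendstoUniformlyOn_iff.1 h₁ (ε / 3) (by positivity),
    Metric.tendstoUniformlyOn_iff.1 h₂ (ε / 3) (by positivity)] with i hi₁ hi₂
  refine (abs_flux_sub_flux_le v fun u => ?_).trans_lt (by linarith : 2 * ε / 3 < ε)
  have ht := Ico_subset_Icc_self (theta_mem_Ico u v)
  have e₁ := abs_lt.1 (hi₁ _ ht)
  have e₂ := abs_lt.1 (hi₂ _ ht)
  rw [excess_eq_arcMass, excess_eq_arcMass, abs_le]
  constructor <;> linarith [e₁.1, e₁.2, e₂.1, e₂.2]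

theorem stmt9_general
    (ρ₁ ρ₂ : ℕ → Measure Circle')
    [∀ n, IsFiniteMeasure (ρ₁ n)] [∀ n, IsFiniteMeasure (ρ₂ n)]
    (σ₁ σ₂ : Measure Circle') [IsFiniteMeasure σ₁] [IsFiniteMeasure σ₂]
    (hac₁ : σ₁ ≪ (volume : Measure Circle')) (hac₂ : σ₂ ≪ (volume : Measure Circle'))
    (hw₁ : ∀ f : BoundedContinuousFunction Circle' ℝ,
      Filter.Tendsto (fun n => ∫ x, f x ∂(ρ₁ n)) Filter.atTop (nhds (∫ x, f x ∂σ₁)))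
    (hw₂ : ∀ f : BoundedContinuousFunction Circle' ℝ,
      Filter.Tendsto (fun n => ∫ x, f x ∂(ρ₂ n)) Filter.atTop (nhds (∫ x, f x ∂σ₂))) :
    ∀ v : Circle',
      Filter.Tendsto (fun n => flux (ρ₁ n) (ρ₂ n) v) Filter.atTop (nhds (flux σ₁ σ₂ v)) := by
  intro v
  have := hac₁.nullSingletonClass
  have := hac₂.nullSingletonClass
  exact tendsto_flux_of_tendstoUniformlyOn v (tendstoUniformlyOn_arcMass hw₁ v)
    (tendstoUniformlyOn_arcMass hw₂ v)

/-- pointwise convergence of the fluxes under weak convergence of the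
measures towards absolutely continuous limits. -/
theorem stmt9 (m₁ m₂ : ℝ) (hm₁ : 0 < m₁) (hm₂ : 0 < m₂) (hm : m₁ ≤ m₂)
    (ρ₁ ρ₂ : ℕ → Measure Circle')
    [∀ n, IsFiniteMeasure (ρ₁ n)] [∀ n, IsFiniteMeasure (ρ₂ n)]
    (hmass₁ : ∀ n, ρ₁ n Set.univ = ENNReal.ofReal m₁)
    (hmass₂ : ∀ n, ρ₂ n Set.univ = ENNReal.ofReal m₂)
    (σ₁ σ₂ : Measure Circle') [IsFiniteMeasure σ₁] [IsFiniteMeasure σ₂]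
    (hac₁ : σ₁ ≪ (volume : Measure Circle')) (hac₂ : σ₂ ≪ (volume : Measure Circle'))
    (hw₁ : ∀ f : BoundedContinuousFunction Circle' ℝ,
      Filter.Tendsto (fun n => ∫ x, f x ∂(ρ₁ n)) Filter.atTop (nhds (∫ x, f x ∂σ₁)))
    (hw₂ : ∀ f : BoundedContinuousFunction Circle' ℝ,
      Filter.Tendsto (fun n => ∫ x, f x ∂(ρ₂ n)) Filter.atTop (nhds (∫ x, f x ∂σ₂))) :
    ∀ v : Circle',
      Filter.Tendsto (fun n => flux (ρ₁ n) (ρ₂ n) v) Filter.atTop (nhds (flux σ₁ σ₂ v)) :=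
  stmt9_general ρ₁ ρ₂ σ₁ σ₂ hac₁ hac₂ hw₁ hw₂

end
end
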